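/- If the summed structured pattern pair (A_1+⋯+A_m, B_1+⋯+B_m) — whose (k,l) entry is a free parameter iff it is a free parameter in some subsystem — is structurally controllable as a linear system (i.e., some realization (Ã, B̃) of this pair has rank [B̃, ÃB̃, …, Ã^{n−1}B̃] = n), then the structured switched linear system is structurally controllable. -/
import Mathlib


/-- A realization of the structured pattern `(PA, PB)` of a switched linear system:
each matrix vanishes at every fixed-zero (non-free-parameter) position. -/
def IsRealization {m n r : ℕ}
    (PA : Fin m → Fin n → Fin n → Prop) (PB : Fin m → Fin n → Fin r → Prop)
    (A : Fin m → Matrix (Fin n) (Fin n) ℝ) (B : Fin m → Matrix (Fin n) (Fin r) ℝ) : Prop :=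
  (∀ i k l, ¬ PA i k l → A i k l = 0) ∧ (∀ i k j, ¬ PB i k j → B i k j = 0)

/-- The switched controllable subspace `⟨A_1,…,A_m | B_1,…,B_m⟩`: the smallest subspace of
`ℝ^n` containing the columns of every `B i` and invariant under every `A i`. -/
noncomputable def switchedCtrb {m n r : ℕ} (A : Fin m → Matrix (Fin n) (Fin n) ℝ)
    (B : Fin m → Matrix (Fin n) (Fin r) ℝ) : Submodule ℝ (Fin n → ℝ) :=
  sInf {W : Submodule ℝ (Fin n → ℝ) |
    (∀ i j, (fun k => B i k j) ∈ W) ∧ ∀ i, ∀ x ∈ W, (A i).mulVec x ∈ W}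

/-- Structural controllability of the structured switched linear system. -/
def StructurallyControllable {m n r : ℕ}
    (PA : Fin m → Fin n → Fin n → Prop) (PB : Fin m → Fin n → Fin r → Prop) : Prop :=
  ∃ A B, IsRealization PA PB A B ∧ switchedCtrb A B = ⊤

/-- The controllability matrix `[B, AB, …, A^{n−1}B]` of a linear pair `(A, B)`. -/
noncomputable def ctrbMatrix {n r : ℕ} (A : Matrix (Fin n) (Fin n) ℝ)
    (B : Matrix (Fin n) (Fin r) ℝ) : Matrix (Fin n) (Fin n × Fin r) ℝ :=
  fun k p => ((A ^ (p.1 : ℕ)) * B) k p.2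

/-- If the summed structured pattern pair `(A_1+⋯+A_m, B_1+⋯+B_m)` —
whose entries are free parameters iff they are free in some subsystem — is structurally
controllable as a linear system, then the structured switched linear system is
structurally controllable. -/
theorem structurallyControllable_of_summedPattern
    {m n r : ℕ} (PA : Fin m → Fin n → Fin n → Prop) (PB : Fin m → Fin n → Fin r → Prop)
    (h : ∃ (A : Matrix (Fin n) (Fin n) ℝ) (B : Matrix (Fin n) (Fin r) ℝ),
      (∀ k l, ¬ (∃ i, PA i k l) → A k l = 0) ∧
      (∀ k j, ¬ (∃ i, PB i k j) → B k j = 0) ∧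
      (ctrbMatrix A B).rank = n) :
    StructurallyControllable PA PB := by
  classical
  obtain ⟨A, B, hA0, hB0, hrank⟩ := h
  set AA : Fin m → Matrix (Fin n) (Fin n) ℝ :=
    fun i k l => if hx : ∃ j, PA j k l then (if i = hx.choose then A k l else 0) else 0 with hAA
  set BB : Fin m → Matrix (Fin n) (Fin r) ℝ :=
    fun i k j => if hx : ∃ i', PB i' k j then (if i = hx.choose then B k j else 0) else 0 with hBB
  have hAsum : ∀ k l, ∑ i, AA i k l = A k l := by
    intro k l
    by_cases hx : ∃ j, PA j k l
    · simp [hAA, hx, Finset.sum_ite_eq']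
    · simp [hAA, hx, hA0 k l hx]
  have hBsum : ∀ k j, ∑ i, BB i k j = B k j := by
    intro k j
    by_cases hx : ∃ i', PB i' k j
    · simp [hBB, hx, Finset.sum_ite_eq']
    · simp [hBB, hx, hB0 k j hx]
  refine ⟨AA, BB, ⟨?_, ?_⟩, ?_⟩
  · intro i k l hne
    simp only [hAA]
    split_ifs with h1 h2
    · exact absurd (h2 ▸ h1.choose_spec) hne
    · rfl
    · rfl
  · intro i k j hne
    simp only [hBB]
    split_ifs with h1 h2
    · exact absurd (h2 ▸ h1.choose_spec) hne
    · rfl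
    · rfl
  · rw [switchedCtrb, eq_top_iff]
    refine le_sInf ?_
    rintro W ⟨hWB, hWA⟩
    -- columns of B are in W
    have hBcol : ∀ j, (fun k => B k j) ∈ W := by
      intro j
      have : (fun k => B k j) = ∑ i, (fun k => BB i k j) := by
        funext k
        rw [Finset.sum_apply]
        exact (hBsum k j).symm
      rw [this]
      exact Submodule.sum_mem W fun i _ => hWB i j
    -- W is invariant under A
    have hAinv : ∀ x ∈ W, A.mulVec x ∈ W := by
      intro x hx
      have : A.mulVec x = ∑ i, (AA i).mulVec x := by
        funext k
        rw [Finset.sum_apply]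
        simp only [Matrix.mulVec, dotProduct]
        rw [Finset.sum_comm]
        refine Finset.sum_congr rfl fun l _ => ?_
        rw [← Finset.sum_mul, hAsum]
      rw [this]
      exact Submodule.sum_mem W fun i _ => hWA i x hx
    -- columns of A^p * B are in W
    have hpow : ∀ (p : ℕ) (j : Fin r), (fun k => ((A ^ p) * B) k j) ∈ W := by
      intro p
      induction p with
      | zero => intro j; simpa using hBcol j
      | succ p ih =>
        intro j
        have : (fun k => ((A ^ (p + 1)) * B) k j)
            = A.mulVec (fun k => ((A ^ p) * B) k j) := by
          funext k
          rw [pow_succ']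
          simp [Matrix.mul_apply, Matrix.mulVec, dotProduct, Finset.mul_sum, Finset.sum_mul, mul_assoc]
          rw [Finset.sum_comm]
        rw [this]
        exact hAinv _ (ih j)
    -- the range of the controllability matrix is everything
    have hr : LinearMap.range (ctrbMatrix A B).mulVecLin = ⊤ := by
      apply Submodule.eq_top_of_finrank_eq
      rw [← Matrix.rank, hrank, Module.finrank_fintype_fun_eq_card, Fintype.card_fin]
    intro x _
    have hx : x ∈ LinearMap.range (ctrbMatrix A B).mulVecLin := hr ▸ Submodule.mem_top
    obtain ⟨c, rfl⟩ := hx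
    have : (ctrbMatrix A B).mulVecLin c
        = ∑ p : Fin n × Fin r, c p • (fun k => ctrbMatrix A B k p) := by
      funext k
      rw [Finset.sum_apply]
      simp [Matrix.mulVecLin, Matrix.mulVec, dotProduct, mul_comm]
    rw [this]
    exact Submodule.sum_mem W fun p _ => Submodule.smul_mem W _ (hpow p.1 p.2)
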